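/- If 2·P_hH − P_lL − P_lL·P_hH ≥ 0, then α_NL ≤ (P_lH² + 2·P_lL² − P_lH·P_hH·P_lL)/(P_lH² + 4·P_lL² − 4·P_lH·P_hH·P_lL) − P_lH·√(P_lH·P_lL·(2·P_hH − P_lL − P_lL·P_hH))/(P_lH² + 4·P_lL² − 4·P_lH·P_hH·P_lL). -/
import Mathlib


/-- α_NL: the changing point between Segment 2 and Segment 3. -/
noncomputable def alphaNL (PhH PlH PhL PlL : ℝ) : ℝ :=
  (2 * PhH * PlL ^ 2 + PhH * (PhH + 3 * PlL) - (3 * PhH + PlL) + 2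
      - 2 * PhL * Real.sqrt (PhH * PhL * PlH * PlL)) /
    (2 * PlH ^ 2 + 8 * PhH * PlL ^ 2)

private lemma aux_P1 (a b : ℝ) (ha : 0 ≤ a) (hb : 0 ≤ b) (hb1 : b ≤ 1) :
    0 ≤ 2 + 5*b + 3*b^2 - b^3 - b^4 + a*(13 + 20*b + b^2 - 6*b^3)
      + a^2*(25 + 17*b - 8*b^2) + a^3*(15 + 6*b) + 9*a^4 := by
  have h1b : 0 ≤ 1 - b := by linarith
  have g0 : 0 ≤ 2 + 5*b + 3*b^2 - b^3 - b^4 := by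
    nlinarith [mul_nonneg (mul_nonneg hb hb) h1b, mul_nonneg (mul_nonneg (mul_nonneg hb hb) hb) h1b]
  have g1 : 0 ≤ 13 + 20*b + b^2 - 6*b^3 := by
    nlinarith [mul_nonneg (mul_nonneg hb hb) h1b, mul_nonneg hb h1b]
  have g2 : 0 ≤ 25 + 17*b - 8*b^2 := by nlinarith [mul_nonneg hb h1b]
  have g3 : 0 ≤ 15 + 6*b := by linarith
  nlinarith [g0, mul_nonneg ha g1, mul_nonneg (mul_nonneg ha ha) g2,
    mul_nonneg (mul_nonneg (mul_nonneg ha ha) ha) g3, pow_nonneg ha 4]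

private lemma aux_E2 (a b : ℝ) (ha : 0 ≤ a) (hb : 0 ≤ b) (hb1 : b ≤ 1) :
    0 ≤ 3 + 16*b + 33*b^2 + 30*b^3 + 5*b^4 - 12*b^5 - 9*b^6 - 2*b^7
      + a*(40 + 174*b + 270*b^2 + 140*b^3 - 60*b^4 - 90*b^5 - 26*b^6)
      + a^2*(217 + 738*b + 782*b^2 + 88*b^3 - 303*b^4 - 130*b^5)
      + a^3*(626 + 1580*b + 984*b^2 - 268*b^3 - 298*b^4)
      + a^4*(1077 + 1908*b + 585*b^2 - 246*b^3)
      + a^5*(1188 + 1350*b + 162*b^2)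
      + a^6*(783 + 378*b) + 162*a^7 := by
  have h1b : 0 ≤ 1 - b := by linarith
  have hb2 : 0 ≤ b^2 := sq_nonneg b
  have hb3 : 0 ≤ b^3 := pow_nonneg hb 3
  have hb4 : 0 ≤ b^4 := pow_nonneg hb 4
  have hb5 : 0 ≤ b^5 := pow_nonneg hb 5
  have hb6 : 0 ≤ b^6 := pow_nonneg hb 6
  have g0 : 0 ≤ 3 + 16*b + 33*b^2 + 30*b^3 + 5*b^4 - 12*b^5 - 9*b^6 - 2*b^7 := by
    nlinarith [mul_nonneg hb3 h1b, mul_nonneg hb4 h1b, mul_nonneg hb5 h1b, mul_nonneg hb6 h1b]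
  have g1 : 0 ≤ 40 + 174*b + 270*b^2 + 140*b^3 - 60*b^4 - 90*b^5 - 26*b^6 := by
    nlinarith [mul_nonneg hb2 h1b, mul_nonneg hb3 h1b, mul_nonneg hb4 h1b, mul_nonneg hb5 h1b]
  have g2 : 0 ≤ 217 + 738*b + 782*b^2 + 88*b^3 - 303*b^4 - 130*b^5 := by
    nlinarith [mul_nonneg hb2 h1b, mul_nonneg hb3 h1b, mul_nonneg hb4 h1b]
  have g3 : 0 ≤ 626 + 1580*b + 984*b^2 - 268*b^3 - 298*b^4 := by
    nlinarith [mul_nonneg hb2 h1b, mul_nonneg hb3 h1b]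
  have g4 : 0 ≤ 1077 + 1908*b + 585*b^2 - 246*b^3 := by
    nlinarith [mul_nonneg hb2 h1b, mul_nonneg hb h1b]
  have g5 : 0 ≤ 1188 + 1350*b + 162*b^2 := by positivity
  have g6 : 0 ≤ 783 + 378*b := by linarith
  have ha2 : 0 ≤ a^2 := sq_nonneg a
  have ha3 : 0 ≤ a^3 := pow_nonneg ha 3
  have ha4 : 0 ≤ a^4 := pow_nonneg ha 4
  have ha5 : 0 ≤ a^5 := pow_nonneg ha 5
  have ha6 : 0 ≤ a^6 := pow_nonneg ha 6
  have ha7 : 0 ≤ a^7 := pow_nonneg ha 7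
  nlinarith [g0, mul_nonneg ha g1, mul_nonneg ha2 g2, mul_nonneg ha3 g3,
    mul_nonneg ha4 g4, mul_nonneg ha5 g5, mul_nonneg ha6 g6, ha7]

private lemma aux_key (P Q S t : ℝ) (hP : 0 ≤ P) (hS : 0 ≤ S) (hSsq : S ^ 2 = t)
    (hE : Q ^ 2 * t ≤ P ^ 2) : 0 ≤ P + Q * S := by
  rcases le_or_gt 0 Q with hQ | hQ
  · exact add_nonneg hP (mul_nonneg hQ hS)
  · have hQSsq : (Q * S) ^ 2 ≤ P ^ 2 := by nlinarith
    have h2 := Real.sqrt_le_sqrt hQSsq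
    rw [Real.sqrt_sq hP, Real.sqrt_sq_eq_abs] at h2
    linarith [neg_abs_le (Q * S)]

set_option maxHeartbeats 1600000 in
/-- when 2·P_hH - P_lL - P_lL·P_hH ≥ 0, α_NL is below the bound B. -/
theorem stmt_19 (PhH PlH PhL PlL : ℝ)
    (hPhL : 0 < PhL) (hhh : PhL < PhH) (hHL : PhH ≤ PlL) (hPlL : PlL < 1)
    (hsH : PhH + PlH = 1) (hsL : PhL + PlL = 1)
    (hcase : 0 ≤ 2 * PhH - PlL - PlL * PhH) :
    alphaNL PhH PlH PhL PlL ≤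
      (PlH ^ 2 + 2 * PlL ^ 2 - PlH * PhH * PlL)
          / (PlH ^ 2 + 4 * PlL ^ 2 - 4 * PlH * PhH * PlL)
        - PlH * Real.sqrt (PlH * PlL * (2 * PhH - PlL - PlL * PhH))
          / (PlH ^ 2 + 4 * PlL ^ 2 - 4 * PlH * PhH * PlL) := by
  have hPlHe : PlH = 1 - PhH := by linarith
  have hPhLe : PhL = 1 - PlL := by linarith
  subst hPlHe hPhLe
  set h := PhH with hh
  set l := PlL with hl
  have h0 : 0 < h := lt_trans hPhL hhh
  have hl0 : (0:ℝ) < l := by linarith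
  have h1 : h < 1 := lt_of_le_of_lt hHL hPlL
  have ha : 0 ≤ h + l - 1 := by linarith
  have hb : 0 ≤ l - h := by linarith
  have hb1 : l - h ≤ 1 := by linarith
  -- square roots
  have ht : 0 ≤ h * (1 - l) * (1 - h) * l := by nlinarith
  have hS : 0 ≤ Real.sqrt (h * (1 - l) * (1 - h) * l) := Real.sqrt_nonneg _
  have hSsq : Real.sqrt (h * (1 - l) * (1 - h) * l) ^ 2 = h * (1 - l) * (1 - h) * l :=
    Real.sq_sqrt ht
  have hS2le : Real.sqrt ((1 - h) * l * (2 * h - l - l * h))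
      ≤ Real.sqrt (h * (1 - l) * (1 - h) * l) := by
    apply Real.sqrt_le_sqrt
    nlinarith [mul_nonneg (mul_nonneg (by linarith : (0:ℝ) ≤ 1 - h) hl0.le) hb]
  -- denominators
  have hD1 : (0:ℝ) < 2 * (1 - h) ^ 2 + 8 * h * l ^ 2 := by nlinarith [sq_nonneg (1 - h)]
  have hD2 : (0:ℝ) < (1 - h) ^ 2 + 4 * l ^ 2 - 4 * (1 - h) * h * l := by
    nlinarith [sq_nonneg (1 - h - 2 * l), mul_pos (mul_pos (sub_pos.2 h1) (sub_pos.2 h1)) hl0]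
  -- polynomial positivity facts
  have hP1 : 0 ≤ 1 - 4*l + 4*l^2 - 3*h + 10*h*l - 12*h*l^2 + 8*h*l^3 + 3*h^2 - 8*h^2*l
      + 8*h^2*l^2 - h^3 + 2*h^3*l := by
    have haux := aux_P1 (h + l - 1) (l - h) ha hb hb1
    linarith [haux]
  have hE2 : 0 ≤ 1 - 8*l + 24*l^2 - 32*l^3 + 16*l^4 - 6*h + 40*h*l - 92*h*l^2 + 64*h*l^3
      + 64*h*l^4 - 128*h*l^5 + 64*h*l^6 + 15*h^2 - 80*h^2*l + 128*h^2*l^2 - 176*h^2*l^4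
      + 128*h^2*l^5 - 20*h^3 + 80*h^3*l - 72*h^3*l^2 - 64*h^3*l^3 + 96*h^3*l^4 + 15*h^4
      - 40*h^4*l + 8*h^4*l^2 + 32*h^4*l^3 - 6*h^5 + 8*h^5*l + 4*h^5*l^2 + h^6 := by
    have haux := aux_E2 (h + l - 1) (l - h) ha hb hb1
    linarith [haux]
  -- P := N*D1 - A0*D2 is (l-h) * P1
  have hPnn : 0 ≤ ((1 - h) ^ 2 + 2 * l ^ 2 - (1 - h) * h * l) * (2 * (1 - h) ^ 2 + 8 * h * l ^ 2)
      - (2 * h * l ^ 2 + h * (h + 3 * l) - (3 * h + l) + 2)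
        * ((1 - h) ^ 2 + 4 * l ^ 2 - 4 * (1 - h) * h * l) := by
    have hid : ((1 - h) ^ 2 + 2 * l ^ 2 - (1 - h) * h * l) * (2 * (1 - h) ^ 2 + 8 * h * l ^ 2)
        - (2 * h * l ^ 2 + h * (h + 3 * l) - (3 * h + l) + 2)
          * ((1 - h) ^ 2 + 4 * l ^ 2 - 4 * (1 - h) * h * l)
        = (l - h) * (1 - 4*l + 4*l^2 - 3*h + 10*h*l - 12*h*l^2 + 8*h*l^3 + 3*h^2 - 8*h^2*l
          + 8*h^2*l^2 - h^3 + 2*h^3*l) := by ring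
    rw [hid]; exact mul_nonneg hb hP1
  have hEfact : (2 * (1 - l) * ((1 - h) ^ 2 + 4 * l ^ 2 - 4 * (1 - h) * h * l)
        - (1 - h) * (2 * (1 - h) ^ 2 + 8 * h * l ^ 2)) ^ 2 * (h * (1 - l) * (1 - h) * l)
      ≤ (((1 - h) ^ 2 + 2 * l ^ 2 - (1 - h) * h * l) * (2 * (1 - h) ^ 2 + 8 * h * l ^ 2)
        - (2 * h * l ^ 2 + h * (h + 3 * l) - (3 * h + l) + 2)
          * ((1 - h) ^ 2 + 4 * l ^ 2 - 4 * (1 - h) * h * l)) ^ 2 := by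
    have hid : (((1 - h) ^ 2 + 2 * l ^ 2 - (1 - h) * h * l) * (2 * (1 - h) ^ 2 + 8 * h * l ^ 2)
          - (2 * h * l ^ 2 + h * (h + 3 * l) - (3 * h + l) + 2)
            * ((1 - h) ^ 2 + 4 * l ^ 2 - 4 * (1 - h) * h * l)) ^ 2
        - (2 * (1 - l) * ((1 - h) ^ 2 + 4 * l ^ 2 - 4 * (1 - h) * h * l)
          - (1 - h) * (2 * (1 - h) ^ 2 + 8 * h * l ^ 2)) ^ 2 * (h * (1 - l) * (1 - h) * l)
        = (l - h) ^ 2 * (1 - 8*l + 24*l^2 - 32*l^3 + 16*l^4 - 6*h + 40*h*l - 92*h*l^2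
          + 64*h*l^3 + 64*h*l^4 - 128*h*l^5 + 64*h*l^6 + 15*h^2 - 80*h^2*l + 128*h^2*l^2
          - 176*h^2*l^4 + 128*h^2*l^5 - 20*h^3 + 80*h^3*l - 72*h^3*l^2 - 64*h^3*l^3
          + 96*h^3*l^4 + 15*h^4 - 40*h^4*l + 8*h^4*l^2 + 32*h^4*l^3 - 6*h^5 + 8*h^5*l
          + 4*h^5*l^2 + h^6) := by ring
    nlinarith [mul_nonneg (sq_nonneg (l - h)) hE2, hid]
  have key := aux_key _ _ _ _ hPnn hS hSsq hEfact
  -- assemble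
  unfold alphaNL
  rw [div_sub_div_same, div_le_div_iff₀ hD1 hD2]
  have h1h : (0:ℝ) ≤ 1 - h := by linarith
  have step1 := mul_le_mul_of_nonneg_left hS2le h1h
  nlinarith [key, step1, hD1, hS2le, mul_le_mul_of_nonneg_right
    (sub_le_sub_left step1 ((1 - h) ^ 2 + 2 * l ^ 2 - (1 - h) * h * l)) hD1.le]
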